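/- arXiv:1801.07584 — 9 statements merged into one kernel-verified Lean document; each statement's English description precedes it below -/
import Mathlib

section
/- If a sequence (a_n) of nonzero real numbers has Raabe value p with p > 1, then the series ∑_{n=1}^∞ a_n converges absolutely, i.e., ∑_{n=1}^∞ |a_n| converges. -/
/-!
Choose `1 < r < p`. Since `n ((1 + 1/n)^r - 1) → r`, the Raabe hypothesis gives
`(1 + 1/n)^r < |aₙ / aₙ₊₁|` for large `n`, i.e. `n^r |aₙ|` is eventually decreasing, hence
bounded. So `|aₙ| = O(n^(-r))`, and the `p`-series comparison gives convergence.
-/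

open Filter Topology Asymptotics

lemma tendsto_nat_mul_one_add_one_div_rpow_sub_one (r : ℝ) :
    Tendsto (fun n : ℕ => (n : ℝ) * ((1 + 1 / n) ^ r - 1)) atTop (𝓝 r) := by
  have hderiv : HasDerivAt (fun x : ℝ => x ^ r) r 1 := by
    simpa using Real.hasDerivAt_rpow_const (x := 1) (p := r) (Or.inl one_ne_zero)
  have hto_one : Tendsto (fun n : ℕ => (1 : ℝ) + 1 / n) atTop (𝓝[≠] 1) := by
    refine tendsto_nhdsWithin_iff.2 ⟨?_, ?_⟩
    · simpa using tendsto_one_div_atTop_nhds_zero_nat.const_add (1 : ℝ)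
    · filter_upwards [eventually_gt_atTop 0] with n hn
      simp only [Set.mem_compl_iff, Set.mem_singleton_iff, add_eq_left]
      positivity
  refine ((hasDerivAt_iff_tendsto_slope.1 hderiv).comp hto_one).congr' ?_
  filter_upwards [eventually_gt_atTop 0] with n hn
  have : (n : ℝ) ≠ 0 := by positivity
  simp only [Function.comp, slope_def_field, Real.one_rpow]
  field_simp
  ring

lemma add_one_rpow_mul_abs_lt_rpow_mul_abs {t x y r : ℝ} (ht : 0 < t) (hy : y ≠ 0)
    (h : (1 + 1 / t) ^ r < |x / y|) : (t + 1) ^ r * |y| < t ^ r * |x| := by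
  rwa [show 1 + 1 / t = (t + 1) / t by field_simp, Real.div_rpow (by positivity) ht.le, abs_div,
    div_lt_div_iff₀ (by positivity) (abs_pos.2 hy), mul_comm |x|] at h

lemma Filter.isBoundedUnder_le_of_eventually_succ_le {α : Type*} [Preorder α] {u : ℕ → α}
    (h : ∀ᶠ n in atTop, u (n + 1) ≤ u n) : IsBoundedUnder (· ≤ ·) atTop u := by
  obtain ⟨N, hN⟩ := eventually_atTop.1 h
  exact ⟨u N, eventually_map.2 <| eventually_atTop.2
    ⟨N, fun n hn => Nat.rel_of_forall_rel_succ_of_le_of_le (· ≥ ·) hN le_rfl hn⟩⟩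

lemma isBigO_rpow_neg_of_isBoundedUnder {f : ℕ → ℝ} {r : ℝ}
    (h : IsBoundedUnder (· ≤ ·) atTop fun n : ℕ => (n : ℝ) ^ r * |f n|) :
    f =O[atTop] fun n : ℕ => (n : ℝ) ^ (-r) := by
  obtain ⟨C, hC⟩ := h
  refine IsBigO.of_bound C ?_
  filter_upwards [eventually_map.1 hC, eventually_gt_atTop 0] with n hn hn0
  have hpos : (0 : ℝ) < (n : ℝ) ^ r := by positivity
  rw [Real.norm_eq_abs, Real.norm_of_nonneg (by positivity), Real.rpow_neg (Nat.cast_nonneg n),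
    ← div_eq_mul_inv, le_div_iff₀ hpos, mul_comm]
  exact hn

/-- If a sequence `(aₙ)` of nonzero real numbers has Raabe value `p > 1`, then
`∑ₙ |aₙ|` converges, i.e. the series converges absolutely. -/
theorem raabe_abs_convergent (a : ℕ → ℝ) (ha : ∀ n, a n ≠ 0) (p : ℝ)
    (hp : Tendsto (fun n : ℕ => (n : ℝ) * (|a n / a (n + 1)| - 1)) atTop (nhds p))
    (hp1 : 1 < p) :
    Summable (fun n => |a n|) := by
  obtain ⟨r, hr1, hrp⟩ := exists_between hp1
  have hstep : ∀ᶠ n : ℕ in atTop,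
      ((n + 1 : ℕ) : ℝ) ^ r * |a (n + 1)| ≤ (n : ℝ) ^ r * |a n| := by
    filter_upwards [(tendsto_nat_mul_one_add_one_div_rpow_sub_one r).eventually_lt hp hrp,
      eventually_gt_atTop 0] with n hlt hn
    have hn' : (0 : ℝ) < n := by exact_mod_cast hn
    push_cast
    exact (add_one_rpow_mul_abs_lt_rpow_mul_abs hn' (ha _)
      ((sub_lt_sub_iff_right 1).1 (lt_of_mul_lt_mul_left hlt hn'.le))).le
  have hbigO : a =O[atTop] fun n : ℕ => (n : ℝ) ^ (-r) :=
    isBigO_rpow_neg_of_isBoundedUnder (isBoundedUnder_le_of_eventually_succ_le hstep)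
  exact summable_of_isBigO_nat (Real.summable_nat_rpow.2 (by linarith)) hbigO.abs_left
end

section
/- If a sequence (a_n) of nonzero real numbers has Raabe value p with p < 0, then the series ∑_{n=1}^∞ a_n diverges (its sequence of partial sums does not converge). -/
open Filter

/-- If a sequence `(aₙ)` of nonzero real numbers has Raabe value `p < 0`, then
the series `∑_{n=1}^∞ aₙ` diverges: its partial sums do not converge. -/
theorem raabe_divergent (a : ℕ → ℝ) (ha : ∀ n, a n ≠ 0) (p : ℝ)
    (hp : Tendsto (fun n : ℕ => (n : ℝ) * (|a n / a (n + 1)| - 1)) atTop (nhds p))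
    (hp0 : p < 0) :
    ¬ ∃ l : ℝ, Tendsto (fun N => ∑ n ∈ Finset.range N, a (n + 1)) atTop (nhds l) := by
  rintro ⟨l, hl⟩
  -- terms tend to 0
  have hterm : Tendsto (fun N => a (N + 1 + 1)) atTop (nhds 0) := by
    have h1 := (hl.comp (tendsto_add_atTop_nat 1)).sub hl
    simp only [Function.comp] at h1
    have h2 : (fun N => (∑ n ∈ Finset.range (N + 1), a (n + 1)) -
        ∑ n ∈ Finset.range N, a (n + 1)) = fun N => a (N + 1) := by
      funext N; rw [Finset.sum_range_succ]; ring
    rw [h2, sub_self] at h1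
    exact h1.comp (tendsto_add_atTop_nat 1)
  -- eventually n * (... ) < 0
  have hev : ∀ᶠ n : ℕ in atTop, (n : ℝ) * (|a n / a (n + 1)| - 1) < 0 :=
    hp.eventually (tendsto_id.eventually_lt_const hp0) |>.mono (fun n h => h)
  obtain ⟨N, hN⟩ := (hev.and (eventually_ge_atTop 1)).exists_forall_of_atTop
  -- |a n| < |a (n+1)| for n ≥ N
  have hinc : ∀ n, N ≤ n → |a n| < |a (n + 1)| := by
    intro n hn
    obtain ⟨hlt, h1⟩ := hN n hn
    have hnpos : (0 : ℝ) < n := by exact_mod_cast h1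
    have hfac : |a n / a (n + 1)| - 1 < 0 := by
      by_contra h
      push_neg at h
      exact absurd hlt (not_lt.mpr (mul_nonneg hnpos.le h))
    have habs : |a (n + 1)| > 0 := abs_pos.mpr (ha _)
    rw [abs_div] at hfac
    have := (div_lt_one habs).mp (sub_neg.mp hfac)
    exact this
  -- |a N| ≤ |a n| for n ≥ N
  have hmono : ∀ n, N ≤ n → |a N| ≤ |a n| := by
    intro n hn
    induction n with
    | zero => have hz : N = 0 := Nat.le_zero.mp hn; simp [hz]
    | succ m ih =>
      rcases Nat.lt_or_ge N (m + 1) with h | h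
      · have hm : N ≤ m := Nat.lt_succ_iff.mp h
        exact (ih hm).trans (hinc m hm).le
      · have : N = m + 1 := le_antisymm hn h
        simp [this]
  -- contradiction: |a (N' + 2)| ≥ |a N| > 0 but a (N'+2) → 0
  have h0 : Tendsto (fun n => |a (n + 1 + 1)|) atTop (nhds 0) := by
    simpa using hterm.abs
  have hge : ∀ᶠ n : ℕ in atTop, |a N| ≤ |a (n + 1 + 1)| := by
    filter_upwards [eventually_ge_atTop N] with n hn
    exact hmono _ (by omega)
  have : |a N| ≤ 0 := ge_of_tendsto h0 hge
  exact absurd this (not_le.mpr (abs_pos.mpr (ha N)))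
end

section
/- If a sequence (a_n) of nonzero real numbers has Raabe value p with 0 ≤ p < 1, then the series ∑_{n=1}^∞ |a_n| diverges; in particular ∑_{n=1}^∞ a_n is not absolutely convergent. -/
open Filter

/-- If a sequence `(aₙ)` of nonzero real numbers has Raabe value `p` with `0 ≤ p < 1`,
then `∑ₙ |aₙ|` diverges: the series is not absolutely convergent. -/
theorem raabe_not_abs_convergent (a : ℕ → ℝ) (ha : ∀ n, a n ≠ 0) (p : ℝ)
    (hp : Tendsto (fun n : ℕ => (n : ℝ) * (|a n / a (n + 1)| - 1)) atTop (nhds p))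
    (hp0 : 0 ≤ p) (hp1 : p < 1) :
    ¬ Summable (fun n => |a n|) := by
  intro hsum
  have hev : ∀ᶠ n : ℕ in atTop, (n : ℝ) * (|a n / a (n + 1)| - 1) < 1 :=
    hp.eventually_lt_const hp1
  obtain ⟨N₀, hN₀⟩ := eventually_atTop.mp hev
  set N := max N₀ 1 with hN
  have hN1 : 1 ≤ N := le_max_right _ _
  -- step: for n ≥ N, n * |a n| ≤ (n+1) * |a (n+1)|
  have step : ∀ n, N ≤ n → (n : ℝ) * |a n| ≤ ((n : ℝ) + 1) * |a (n + 1)| := by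
    intro n hn
    have h1 : (n : ℝ) * (|a n / a (n + 1)| - 1) < 1 :=
      hN₀ n (le_trans (le_max_left _ _) hn)
    have hnpos : (0 : ℝ) < n := by
      exact_mod_cast lt_of_lt_of_le hN1 hn
    have hap : 0 < |a (n + 1)| := abs_pos.mpr (ha (n + 1))
    rw [abs_div] at h1
    have h2 : (n : ℝ) * (|a n| / |a (n + 1)|) < (n : ℝ) + 1 := by nlinarith
    have h3 : (n : ℝ) * |a n| / |a (n + 1)| < (n : ℝ) + 1 := by
      rw [mul_div_assoc]; exact h2
    have := (div_lt_iff₀ hap).mp h3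
    linarith
  -- hence for n ≥ N, N * |a N| ≤ n * |a n|
  have mono : ∀ n, N ≤ n → (N : ℝ) * |a N| ≤ (n : ℝ) * |a n| := by
    intro n hn
    induction n, hn using Nat.le_induction with
    | base => exact le_rfl
    | succ n hn ih =>
      refine le_trans ih (le_trans (step n hn) ?_)
      push_cast
      exact le_rfl
  obtain ⟨c, hc⟩ : ∃ c : ℝ, c = (N : ℝ) * |a N| := ⟨_, rfl⟩
  have hcpos : 0 < c := by
    rw [hc]
    have : (0:ℝ) < N := by exact_mod_cast hN1
    exact mul_pos this (abs_pos.mpr (ha N))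
  -- c / n ≤ |a n| for n ≥ N
  have hle : ∀ n : ℕ, c / ((n : ℝ) + N) ≤ |a (n + N)| := by
    intro n
    have hNpos : (0 : ℝ) < (n : ℝ) + N := by positivity
    rw [div_le_iff₀ hNpos, hc, mul_comm (|a (n + N)|)]
    have := mono (n + N) (Nat.le_add_left _ _)
    push_cast at this
    linarith [this]
  have hs1 : Summable (fun n : ℕ => |a (n + N)|) := (summable_nat_add_iff (f := fun n => |a n|) N).mpr hsum
  have hs2 : Summable (fun n : ℕ => c / ((n : ℝ) + N)) := by
    refine Summable.of_nonneg_of_le (fun n => ?_) hle hs1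
    positivity
  have hs3 : Summable (fun n : ℕ => c / (n : ℝ)) := (summable_nat_add_iff (f := fun n : ℕ => c / (n : ℝ)) N).mp (by
    have : (fun n : ℕ => c / ((n + N : ℕ) : ℝ)) = fun n : ℕ => c / ((n : ℝ) + N) := by
      funext n; push_cast; ring_nf
    rw [this]; exact hs2)
  have hs4 : Summable (fun n : ℕ => (n : ℝ)⁻¹) := by
    have h := hs3.mul_left c⁻¹
    have heq : (fun n : ℕ => c⁻¹ * (c / (n : ℝ))) = fun n : ℕ => (n : ℝ)⁻¹ := by
      funext n
      rw [div_eq_mul_inv, ← mul_assoc, inv_mul_cancel₀ hcpos.ne', one_mul]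
    rwa [heq] at h
  exact Real.not_summable_natCast_inv hs4
end

section
/- If a sequence (a_n) of nonzero real numbers has Raabe value p with 0 ≤ p < 1, then there exists a natural number N and a constant M > 0 such that M/n ≤ |a_n| for all n ≥ N. -/
open Filter

/-- If a sequence `(aₙ)` of nonzero real numbers has Raabe value `p` with `0 ≤ p < 1`,
then there exist `N` and `M > 0` with `M / n ≤ |aₙ|` for all `n ≥ N`. -/
theorem raabe_lower_bound (a : ℕ → ℝ) (ha : ∀ n, a n ≠ 0) (p : ℝ)
    (hp : Tendsto (fun n : ℕ => (n : ℝ) * (|a n / a (n + 1)| - 1)) atTop (nhds p))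
    (hp0 : 0 ≤ p) (hp1 : p < 1) :
    ∃ (N : ℕ) (M : ℝ), 0 < M ∧ ∀ n ≥ N, M / (n : ℝ) ≤ |a n| := by
  have hev : ∀ᶠ n : ℕ in atTop, (n : ℝ) * (|a n / a (n + 1)| - 1) < 1 :=
    hp.eventually_lt_const hp1
  obtain ⟨N₀, hN₀⟩ := eventually_atTop.mp hev
  set N := max N₀ 1 with hN
  have hN1 : 1 ≤ N := le_max_right _ _
  -- step: monotonicity of n * |a n| from N on
  have step : ∀ n, N ≤ n → (n : ℝ) * |a n| ≤ ((n : ℕ) + 1 : ℝ) * |a (n + 1)| := by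
    intro n hn
    have hnpos : (0 : ℝ) < n := by
      exact_mod_cast lt_of_lt_of_le (Nat.lt_of_lt_of_le Nat.zero_lt_one hN1) hn
    have h1 := hN₀ n (le_trans (le_max_left _ _) hn)
    have habs : |a n / a (n + 1)| = |a n| / |a (n + 1)| := abs_div _ _
    have hpos : (0 : ℝ) < |a (n + 1)| := abs_pos.mpr (ha (n + 1))
    have h2 : (n : ℝ) * (|a n| / |a (n + 1)|) < n + 1 := by
      have := h1
      rw [habs] at this
      nlinarith
    have h3 : (n : ℝ) * |a n| < (n + 1) * |a (n + 1)| := by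
      have h4 := mul_lt_mul_of_pos_right h2 hpos
      rw [mul_assoc, div_mul_cancel₀ _ hpos.ne'] at h4
      exact h4
    linarith
  have key : ∀ n, N ≤ n → (N : ℝ) * |a N| ≤ (n : ℝ) * |a n| := by
    intro n hn
    induction n, hn using Nat.le_induction with
    | base => exact le_refl _
    | succ n hn ih =>
      refine le_trans ih ?_
      have := step n hn
      push_cast at this ⊢
      linarith
  refine ⟨N, (N : ℝ) * |a N|, ?_, ?_⟩
  · have : (0 : ℝ) < N := by exact_mod_cast Nat.lt_of_lt_of_le Nat.zero_lt_one hN1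
    exact mul_pos this (abs_pos.mpr (ha N))
  · intro n hn
    have hnpos : (0 : ℝ) < n := by
      exact_mod_cast lt_of_lt_of_le (Nat.lt_of_lt_of_le Nat.zero_lt_one hN1) hn
    rw [div_le_iff₀ hnpos]
    calc (N : ℝ) * |a N| ≤ (n : ℝ) * |a n| := key n hn
      _ = |a n| * n := by ring
end

section
/- If a sequence (a_n) of nonzero real numbers has Raabe value p with p > 0, then the sequence (a_n) converges to 0. -/
open Filter

/-- If a sequence `(aₙ)` of nonzero real numbers has Raabe value `p > 0`, then
`(aₙ)` converges to `0`. -/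
theorem raabe_tendsto_zero (a : ℕ → ℝ) (ha : ∀ n, a n ≠ 0) (p : ℝ)
    (hp : Tendsto (fun n : ℕ => (n : ℝ) * (|a n / a (n + 1)| - 1)) atTop (nhds p))
    (hp0 : 0 < p) :
    Tendsto a atTop (nhds 0) := by
  set q : ℝ := min p 1 / 2 with hq
  have hq0 : 0 < q := by positivity
  have hq1 : q ≤ 1 := by
    have : min p 1 ≤ 1 := min_le_right _ _
    simp only [hq]; linarith
  have hqp : q < p := by
    have h1 : min p 1 ≤ p := min_le_left _ _
    have h2 : 0 < min p 1 := lt_min hp0 one_pos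
    simp only [hq]; linarith
  have hev : ∀ᶠ n : ℕ in atTop, q ≤ (n : ℝ) * (|a n / a (n + 1)| - 1) :=
    hp.eventually (eventually_ge_nhds hqp)
  rw [eventually_atTop] at hev
  obtain ⟨N₀, hN⟩ := hev
  set N := max N₀ 1 with hNdef
  -- key step inequality
  have key : ∀ n, N ≤ n → ((n + 1 : ℕ) : ℝ) ^ q * |a (n + 1)| ≤ (n : ℝ) ^ q * |a n| := by
    intro n hn
    have hn1 : 1 ≤ n := le_trans (le_max_right _ _) hn
    have hnpos : (0 : ℝ) < n := by exact_mod_cast hn1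
    have h := hN n (le_trans (le_max_left _ _) hn)
    -- |a n| / |a (n+1)| ≥ 1 + q / n
    have habs : |a n / a (n + 1)| = |a n| / |a (n + 1)| := abs_div _ _
    have hratio : 1 + q / n ≤ |a n| / |a (n + 1)| := by
      rw [← habs]
      have : q / n ≤ |a n / a (n + 1)| - 1 := by
        rw [div_le_iff₀ hnpos] at *
        nlinarith
      linarith
    have hbern : ((1 : ℝ) + 1 / n) ^ q ≤ 1 + q * (1 / n) := by
      apply rpow_one_add_le_one_add_mul_self _ hq0.le hq1
      have h1n : (0:ℝ) ≤ 1 / n := by positivity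
      linarith
    have hstep : (((n + 1 : ℕ) : ℝ) / n) ^ q ≤ |a n| / |a (n + 1)| := by
      have : (((n + 1 : ℕ) : ℝ) / n) = 1 + 1 / n := by
        push_cast; field_simp
      rw [this]
      calc ((1 : ℝ) + 1 / n) ^ q ≤ 1 + q * (1 / n) := hbern
        _ = 1 + q / n := by ring
        _ ≤ |a n| / |a (n + 1)| := hratio
    have han1 : 0 < |a (n + 1)| := abs_pos.2 (ha _)
    have hn1pos : (0 : ℝ) < ((n + 1 : ℕ) : ℝ) := by positivity
    rw [Real.div_rpow hn1pos.le hnpos.le, div_le_div_iff₀ (by positivity) han1] at hstep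
    calc ((n + 1 : ℕ) : ℝ) ^ q * |a (n + 1)| ≤ |a n| * (n : ℝ) ^ q := hstep
      _ = (n : ℝ) ^ q * |a n| := mul_comm _ _
  -- monotone bound: for n ≥ N, n^q |a n| ≤ N^q |a N|
  have bound : ∀ n, N ≤ n → (n : ℝ) ^ q * |a n| ≤ (N : ℝ) ^ q * |a N| := by
    intro n hn
    induction n with
    | zero => omega
    | succ m ih =>
      rcases eq_or_lt_of_le hn with h | h
      · rw [← h]
      · have hm : N ≤ m := by omega
        exact le_trans (key m hm) (ih hm)
  set C := (N : ℝ) ^ q * |a N| with hC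
  have hCnn : 0 ≤ C := by positivity
  -- |a n| ≤ C * n ^ (-q) for n ≥ N
  have habound : ∀ n, N ≤ n → |a n| ≤ C * (n : ℝ) ^ (-q) := by
    intro n hn
    have hn1 : 1 ≤ n := le_trans (le_max_right _ _) hn
    have hnpos : (0 : ℝ) < n := by exact_mod_cast hn1
    have hq' : (0 : ℝ) < (n : ℝ) ^ q := Real.rpow_pos_of_pos hnpos q
    have := bound n hn
    rw [Real.rpow_neg hnpos.le, mul_comm C, ← div_eq_inv_mul, le_div_iff₀ hq']
    calc |a n| * (n : ℝ) ^ q = (n : ℝ) ^ q * |a n| := mul_comm _ _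
      _ ≤ C := this
  -- squeeze
  have hto : Tendsto (fun n : ℕ => C * (n : ℝ) ^ (-q)) atTop (nhds 0) := by
    have h1 : Tendsto (fun x : ℝ => x ^ (-q)) atTop (nhds 0) :=
      tendsto_rpow_neg_atTop hq0
    have h2 : Tendsto (fun n : ℕ => ((n : ℝ)) ^ (-q)) atTop (nhds 0) :=
      h1.comp tendsto_natCast_atTop_atTop
    simpa using h2.const_mul C
  rw [tendsto_zero_iff_abs_tendsto_zero]
  apply squeeze_zero_norm' _ hto
  filter_upwards [eventually_ge_atTop N] with n hn
  simpa using habound n hn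
end

section
/- Raabe's Alternating Series Test: if (a_n) is a sequence of positive real numbers such that lim_{n→∞} n(a_n/a_{n+1} − 1) exists and equals p with 0 < p ≤ 1, then the alternating series ∑_{n=1}^∞ (−1)^{n−1} a_n converges. -/
/-!
A Raabe limit `p > 0` gives, for any `0 < c < p` and all large `n`,
`c · a (n+1) ≤ n · (a n - a (n+1))`. So `a` is eventually decreasing, and summing the
inequality from `N` to `M` gives `c · a M · ∑_{N ≤ n < M} 1/n ≤ a N`; the divergence of the
harmonic series forces `a M → 0`. The alternating series test then applies.
-/

open Filter Finset Topology

section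

variable {a : ℕ → ℝ}

theorem eventually_mul_succ_le_natCast_mul_sub_of_tendsto_raabe {p c : ℝ}
    (ha : ∀ n, 0 < a n)
    (hp : Tendsto (fun n : ℕ => (n : ℝ) * (a n / a (n + 1) - 1)) atTop (𝓝 p)) (hcp : c < p) :
    ∀ᶠ n : ℕ in atTop, c * a (n + 1) ≤ n * (a n - a (n + 1)) := by
  filter_upwards [hp.eventually_const_lt hcp] with n hn
  have h_eq : (n : ℝ) * (a n - a (n + 1)) = n * (a n / a (n + 1) - 1) * a (n + 1) := by
    field_simp [(ha (n + 1)).ne']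
  rw [h_eq]
  exact mul_le_mul_of_nonneg_right hn.le (ha (n + 1)).le

theorem succ_le_of_mul_succ_le_natCast_mul_sub {c : ℝ} {n : ℕ} (hc : 0 < c)
    (ha : 0 < a (n + 1)) (h : c * a (n + 1) ≤ n * (a n - a (n + 1))) : a (n + 1) ≤ a n := by
  by_contra! hlt
  nlinarith [mul_pos hc ha, (n.cast_nonneg : (0 : ℝ) ≤ n)]

theorem mul_sum_Ico_inv_le_sub {c : ℝ} {N : ℕ} (hc : 0 < c) (ha : ∀ n, 0 < a n)
    (h : ∀ n ≥ N, c * a (n + 1) ≤ n * (a n - a (n + 1))) :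
    ∀ M ≥ N, c * a M * ∑ n ∈ Ico N M, (n : ℝ)⁻¹ ≤ a N - a M := by
  intro M hM
  induction M, hM using Nat.le_induction with
  | base => simp
  | succ M hNM ih =>
    have hstep := h M hNM
    have hanti : a (M + 1) ≤ a M := succ_le_of_mul_succ_le_natCast_mul_sub hc (ha _) hstep
    have hM_pos : (0 : ℝ) < M := by
      by_contra! hM0
      nlinarith [mul_pos hc (ha (M + 1)), (M.cast_nonneg : (0 : ℝ) ≤ M)]
    have hsum_nonneg : 0 ≤ ∑ n ∈ Ico N M, (n : ℝ)⁻¹ := sum_nonneg fun n _ => by positivity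
    have hlast : c * a (M + 1) * (M : ℝ)⁻¹ ≤ a M - a (M + 1) := by
      rw [← div_eq_mul_inv, div_le_iff₀ hM_pos]
      linarith
    rw [sum_Ico_succ_top hNM, mul_add]
    nlinarith [mul_le_mul_of_nonneg_right (mul_le_mul_of_nonneg_left hanti hc.le) hsum_nonneg]

theorem tendsto_sum_Ico_inv_atTop (N : ℕ) :
    Tendsto (fun M => ∑ n ∈ Ico N M, (n : ℝ)⁻¹) atTop atTop := by
  have hharmonic : Tendsto (fun M => ∑ n ∈ range M, (n : ℝ)⁻¹) atTop atTop :=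
    (not_summable_iff_tendsto_nat_atTop_of_nonneg fun n => by positivity).1
      Real.not_summable_natCast_inv
  refine (tendsto_atTop_add_const_right _ (-∑ n ∈ range N, (n : ℝ)⁻¹) hharmonic).congr' ?_
  filter_upwards [eventually_ge_atTop N] with M hM
  rw [← sum_range_add_sum_Ico _ hM]
  ring

theorem tendsto_zero_of_eventually_mul_succ_le_natCast_mul_sub {c : ℝ} (hc : 0 < c)
    (ha : ∀ n, 0 < a n) (h : ∀ᶠ n : ℕ in atTop, c * a (n + 1) ≤ n * (a n - a (n + 1))) :
    Tendsto a atTop (𝓝 0) := by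
  obtain ⟨N, hN⟩ := eventually_atTop.1 h
  have hH := tendsto_sum_Ico_inv_atTop N
  have hbound : Tendsto (fun M => a N / (c * ∑ n ∈ Ico N M, (n : ℝ)⁻¹)) atTop (𝓝 0) :=
    tendsto_const_nhds.div_atTop (hH.const_mul_atTop hc)
  refine tendsto_of_tendsto_of_tendsto_of_le_of_le' tendsto_const_nhds hbound
    (Eventually.of_forall fun n => (ha n).le) ?_
  filter_upwards [eventually_ge_atTop N, hH.eventually_gt_atTop 0] with M hNM hH_pos
  rw [le_div_iff₀ (mul_pos hc hH_pos)]
  nlinarith [mul_sum_Ico_inv_le_sub hc ha hN M hNM, ha M]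

end

theorem exists_tendsto_alternating_series_of_eventually_antitone {f : ℕ → ℝ}
    (hanti : ∀ᶠ n in atTop, f (n + 1) ≤ f n) (hf0 : Tendsto f atTop (𝓝 0)) :
    ∃ l, Tendsto (fun n => ∑ i ∈ range n, (-1) ^ i * f i) atTop (𝓝 l) := by
  obtain ⟨N, hN⟩ := eventually_atTop.1 hanti
  have htail : Antitone fun n => f (n + N) :=
    antitone_nat_of_succ_le fun n => by simpa [add_right_comm] using hN (n + N) (by omega)
  obtain ⟨l, hl⟩ :=
    htail.tendsto_alternating_series_of_tendsto_zero (hf0.comp (tendsto_add_atTop_nat N))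
  refine ⟨∑ i ∈ range N, (-1) ^ i * f i + (-1) ^ N * l, ?_⟩
  rw [← tendsto_add_atTop_iff_nat N]
  convert tendsto_const_nhds.add (hl.const_mul ((-1) ^ N)) using 2 with n
  rw [add_comm n N, sum_range_add, mul_sum]
  congr 1
  refine sum_congr rfl fun i _ => ?_
  rw [pow_add, add_comm N i]
  ring

theorem raabe_alternating_series_test_general (a : ℕ → ℝ) (ha : ∀ n, 0 < a n) (p : ℝ)
    (hp : Tendsto (fun n : ℕ => (n : ℝ) * (a n / a (n + 1) - 1)) atTop (nhds p))
    (hp0 : 0 < p) :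
    ∃ l : ℝ, Tendsto (fun N => ∑ n ∈ Finset.range N, (-1 : ℝ) ^ n * a (n + 1))
      atTop (nhds l) := by
  have hc : 0 < p / 2 := half_pos hp0
  have hraabe := eventually_mul_succ_le_natCast_mul_sub_of_tendsto_raabe ha hp (half_lt_self hp0)
  have hanti : ∀ᶠ n in atTop, a (n + 1 + 1) ≤ a (n + 1) :=
    (tendsto_add_atTop_nat 1).eventually
      (hraabe.mono fun n hn => succ_le_of_mul_succ_le_natCast_mul_sub hc (ha _) hn)
  exact exists_tendsto_alternating_series_of_eventually_antitone hanti
    ((tendsto_zero_of_eventually_mul_succ_le_natCast_mul_sub hc ha hraabe).comp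
      (tendsto_add_atTop_nat 1))

/-- Raabe's Alternating Series Test: if `(aₙ)` is a sequence of positive reals with
Raabe limit `p`, `0 < p ≤ 1`, then `∑_{n=1}^∞ (-1)^{n-1} aₙ` converges. -/
theorem raabe_alternating_series_test (a : ℕ → ℝ) (ha : ∀ n, 0 < a n) (p : ℝ)
    (hp : Tendsto (fun n : ℕ => (n : ℝ) * (a n / a (n + 1) - 1)) atTop (nhds p))
    (hp0 : 0 < p) (hp1 : p ≤ 1) :
    ∃ l : ℝ, Tendsto (fun N => ∑ n ∈ Finset.range N, (-1 : ℝ) ^ n * a (n + 1))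
      atTop (nhds l) :=
  raabe_alternating_series_test_general a ha p hp hp0
end

section
/- If (a_n) is a sequence of positive real numbers such that lim_{n→∞} n(a_n/a_{n+1} − 1) exists and equals p with 0 < p < 1, then the alternating series ∑_{n=1}^∞ (−1)^{n−1} a_n converges conditionally: the series converges but ∑_{n=1}^∞ a_n diverges. -/
open Filter

/-- If `(aₙ)` is a sequence of positive reals with Raabe limit `p`, `0 < p < 1`, then
`∑_{n=1}^∞ (-1)^{n-1} aₙ` converges conditionally: the alternating series converges,
but `∑_{n=1}^∞ aₙ` diverges. -/
theorem raabe_conditionally_convergent (a : ℕ → ℝ) (ha : ∀ n, 0 < a n) (p : ℝ)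
    (hp : Tendsto (fun n : ℕ => (n : ℝ) * (a n / a (n + 1) - 1)) atTop (nhds p))
    (hp0 : 0 < p) (hp1 : p < 1) :
    (∃ l : ℝ, Tendsto (fun N => ∑ n ∈ Finset.range N, (-1 : ℝ) ^ n * a (n + 1))
      atTop (nhds l)) ∧
    ¬ ∃ l : ℝ, Tendsto (fun N => ∑ n ∈ Finset.range N, a (n + 1)) atTop (nhds l) := by
  set r : ℝ := p / 2 with hr_def
  have hr0 : 0 < r := by positivity
  have hrp : r < p := by linarith
  have hr1 : r ≤ 1 := by linarith
  -- N₁ : tail where n*(ratio-1) > r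
  obtain ⟨N₁, hN₁⟩ : ∃ N : ℕ, ∀ n ≥ N, 1 ≤ n ∧ r < (n : ℝ) * (a n / a (n + 1) - 1) := by
    have h1 := (hp.eventually (eventually_gt_nhds hrp)).and (eventually_ge_atTop 1)
    rw [eventually_atTop] at h1
    obtain ⟨N, hN⟩ := h1
    exact ⟨N, fun n hn => ⟨(hN n hn).2, (hN n hn).1⟩⟩
  -- basic ratio lower bound on the tail
  have hratio : ∀ n ≥ N₁, 1 + r / (n : ℝ) ≤ a n / a (n + 1) := by
    intro n hn
    obtain ⟨hn1, hnr⟩ := hN₁ n hn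
    have hnpos : (0 : ℝ) < n := by exact_mod_cast hn1
    have := (div_lt_iff₀' hnpos).2 hnr
    linarith [(div_lt_iff₀' hnpos).mpr hnr]
  -- tail antitone
  have hanti : ∀ m, N₁ ≤ m → ∀ n, m ≤ n → a n ≤ a m := by
    intro m hm n hn
    induction n, hn using Nat.le_induction with
    | base => exact le_rfl
    | succ n hmn ih =>
      refine le_trans ?_ ih
      have h := hratio n (le_trans hm hmn)
      have hpos := ha (n + 1)
      have hn0 : (0 : ℝ) < n := by
        exact_mod_cast lt_of_lt_of_le (Nat.lt_of_lt_of_le Nat.zero_lt_one (hN₁ m hm).1 : 0 < m) hmn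
      have : 1 ≤ a n / a (n + 1) := by
        have h2 : (0 : ℝ) ≤ r / n := by positivity
        linarith
      calc a (n + 1) = a (n + 1) * 1 := by ring
        _ ≤ a (n + 1) * (a n / a (n + 1)) := by nlinarith
        _ = a n := by field_simp
  -- decreasing of a n * n ^ r on the tail
  have hdec : ∀ n ≥ N₁, a (n + 1) * ((n : ℝ) + 1) ^ r ≤ a n * (n : ℝ) ^ r := by
    intro n hn
    have hn1 : (1 : ℝ) ≤ n := by exact_mod_cast (hN₁ n hn).1
    have hn0 : (0 : ℝ) < n := by linarith
    have hx : (0 : ℝ) ≤ 1 / n := by positivity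
    have hbern : ((1 : ℝ) + 1 / n) ^ r ≤ 1 + r * (1 / n) :=
      rpow_one_add_le_one_add_mul_self (by linarith) hr0.le hr1
    have hsplit : ((n : ℝ) + 1) ^ r = (n : ℝ) ^ r * (1 + 1 / n) ^ r := by
      rw [← Real.mul_rpow hn0.le (by positivity)]
      congr 1
      field_simp
    have hub : ((n : ℝ) + 1) ^ r ≤ (n : ℝ) ^ r * (a n / a (n + 1)) := by
      rw [hsplit]
      refine mul_le_mul_of_nonneg_left ?_ (by positivity)
      refine le_trans hbern ?_
      have := hratio n hn
      rw [mul_one_div] at *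
      linarith
    calc a (n + 1) * ((n : ℝ) + 1) ^ r
        ≤ a (n + 1) * ((n : ℝ) ^ r * (a n / a (n + 1))) :=
          mul_le_mul_of_nonneg_left hub (ha _).le
      _ = a n / a (n + 1) * a (n + 1) * (n : ℝ) ^ r := by ring
      _ = a n * (n : ℝ) ^ r := by rw [div_mul_cancel₀ _ (ha (n + 1)).ne']
  -- upper bound a n ≤ C * n ^ (-r), hence a → 0
  have hub : ∀ n ≥ N₁, a n * (n : ℝ) ^ r ≤ a N₁ * (N₁ : ℝ) ^ r := by
    intro n hn
    induction n, hn using Nat.le_induction with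
    | base => exact le_rfl
    | succ n hmn ih => exact le_trans (by exact_mod_cast hdec n hmn) ih
  have ha0 : Tendsto a atTop (nhds 0) := by
    have hg : Tendsto (fun n : ℕ => (a N₁ * (N₁ : ℝ) ^ r) * (n : ℝ) ^ (-r)) atTop (nhds 0) := by
      have := ((tendsto_rpow_neg_atTop hr0).comp tendsto_natCast_atTop_atTop).const_mul
        (a N₁ * (N₁ : ℝ) ^ r)
      simpa using this
    refine squeeze_zero' (eventually_atTop.2 ⟨N₁, fun n _ => (ha n).le⟩)
      (eventually_atTop.2 ⟨N₁, fun n hn => ?_⟩) hg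
    have hn1 : (1 : ℝ) ≤ n := by exact_mod_cast (hN₁ n hn).1
    have hn0 : (0 : ℝ) < n := by linarith
    have hpow : (0 : ℝ) < (n : ℝ) ^ r := Real.rpow_pos_of_pos hn0 r
    have h := hub n hn
    have : a n = (a n * (n : ℝ) ^ r) * (n : ℝ) ^ (-r) := by
      rw [Real.rpow_neg hn0.le]
      field_simp
    rw [this]
    exact mul_le_mul_of_nonneg_right h (by positivity)
  constructor
  · -- convergence of the alternating series
    set f : ℕ → ℝ := fun i => a (i + (N₁ + 1)) with hf_def
    have hf_anti : Antitone f := by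
      intro i j hij
      exact hanti (i + (N₁ + 1)) (by omega) (j + (N₁ + 1)) (by omega)
    have hf0 : Tendsto f atTop (nhds 0) := ha0.comp (tendsto_add_atTop_nat (N₁ + 1))
    obtain ⟨l', hl'⟩ := hf_anti.tendsto_alternating_series_of_tendsto_zero hf0
    set S : ℕ → ℝ := fun N => ∑ n ∈ Finset.range N, (-1 : ℝ) ^ n * a (n + 1) with hS_def
    refine ⟨S N₁ + (-1 : ℝ) ^ N₁ * l', ?_⟩
    rw [← tendsto_add_atTop_iff_nat (f := S) N₁]
    have hEq : (fun k => S (k + N₁)) =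
        fun k => S N₁ + (-1 : ℝ) ^ N₁ * ∑ i ∈ Finset.range k, (-1 : ℝ) ^ i * f i := by
      funext k
      rw [hS_def]
      simp only [add_comm k N₁]
      rw [Finset.sum_range_add, Finset.mul_sum]
      congr 1
      refine Finset.sum_congr rfl fun i _ => ?_
      have h1 : (-1 : ℝ) ^ (N₁ + i) = (-1 : ℝ) ^ N₁ * (-1 : ℝ) ^ i := pow_add _ _ _
      have h2 : N₁ + i + 1 = i + (N₁ + 1) := by omega
      rw [h1, h2]
      ring
    rw [hEq]
    exact tendsto_const_nhds.add (hl'.const_mul _)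
  · -- divergence of ∑ a (n+1)
    rintro ⟨l, hl⟩
    -- N₂ : tail where n*(ratio-1) < 1
    obtain ⟨N₂, hN₂⟩ : ∃ N : ℕ, ∀ n ≥ N, 1 ≤ n ∧ (n : ℝ) * (a n / a (n + 1) - 1) < 1 := by
      have h1 := (hp.eventually (eventually_lt_nhds hp1)).and (eventually_ge_atTop 1)
      rw [eventually_atTop] at h1
      obtain ⟨N, hN⟩ := h1
      exact ⟨N, fun n hn => ⟨(hN n hn).2, (hN n hn).1⟩⟩
    have hlow : ∀ n ≥ N₂, a N₂ * (N₂ : ℝ) ≤ a n * (n : ℝ) := by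
      intro n hn
      induction n, hn using Nat.le_induction with
      | base => exact le_rfl
      | succ n hmn ih =>
        refine le_trans ih ?_
        obtain ⟨hn1, hnr⟩ := hN₂ n (le_trans (le_refl N₂) hmn)
        have hn0 : (0 : ℝ) < n := by exact_mod_cast hn1
        have hpos := ha (n + 1)
        have hpos' := ha n
        have h1 : (n : ℝ) * (a n / a (n + 1)) < n + 1 := by nlinarith
        have h2 : (n : ℝ) * (a n / a (n + 1)) * a (n + 1) < ((n : ℝ) + 1) * a (n + 1) :=
          mul_lt_mul_of_pos_right h1 hpos
        rw [mul_assoc, div_mul_cancel₀ _ hpos.ne'] at h2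
        push_cast
        nlinarith [h2]
    have hc : 0 < a N₂ * (N₂ : ℝ) := by
      have hN2pos : (0 : ℝ) < N₂ := by exact_mod_cast (hN₂ N₂ le_rfl).1
      exact mul_pos (ha _) hN2pos
    set c : ℝ := a N₂ * (N₂ : ℝ) with hc_def
    -- summability from convergence of partial sums
    have hmono : Monotone (fun N => ∑ n ∈ Finset.range N, a (n + 1)) := by
      intro i j hij
      exact Finset.sum_le_sum_of_subset_of_nonneg (Finset.range_subset_range.2 hij)
        (fun k _ _ => (ha _).le)
    have hble : ∀ N, ∑ n ∈ Finset.range N, a (n + 1) ≤ l := fun N => hmono.ge_of_tendsto hl N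
    have hsum : Summable (fun n => a (n + 1)) :=
      summable_of_sum_range_le (fun n => (ha _).le) hble
    have hsum2 : Summable (fun n : ℕ => a (n + (N₂ + 1))) := by
      have := (summable_nat_add_iff (f := fun n => a (n + 1)) N₂).2 hsum
      refine this.congr fun n => ?_
      simp [add_assoc, add_comm N₂ 1]
    have hsum3 : Summable (fun n : ℕ => c / ((n : ℝ) + (N₂ + 1))) := by
      refine Summable.of_nonneg_of_le (fun n => by positivity) (fun n => ?_) hsum2
      have h := hlow (n + (N₂ + 1)) (by omega)
      have hpos : (0 : ℝ) < (n : ℝ) + (N₂ + 1) := by positivity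
      rw [div_le_iff₀ hpos]
      calc c ≤ a (n + (N₂ + 1)) * ((n + (N₂ + 1) : ℕ) : ℝ) := h
        _ = a (n + (N₂ + 1)) * ((n : ℝ) + (N₂ + 1)) := by push_cast; ring
    have hsum4 : Summable (fun n : ℕ => 1 / ((n : ℝ) + (N₂ + 1))) := by
      have := hsum3.mul_left (1 / c)
      refine this.congr fun n => ?_
      field_simp
    have hsum5 : Summable (fun n : ℕ => 1 / (n : ℝ)) := by
      rw [← summable_nat_add_iff (N₂ + 1)]
      refine hsum4.congr fun n => ?_
      push_cast
      ring_nf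
    exact Real.not_summable_one_div_natCast hsum5
end

section
/- If (a_n) and (b_n) are sequences of positive real numbers such that lim_{n→∞} n(a_n/a_{n+1} − 1) = p and lim_{n→∞} n(b_n/b_{n+1} − 1) = q with p < q, then the limit lim_{n→∞} n((a_n + b_n)/(a_{n+1} + b_{n+1}) − 1) exists and equals p. -/
/-!
Write `b = c · a`. The Raabe sequence of `c` is `a (n+1) / a n` times the difference of those of
`b` and `a`, so it tends to `q - p > 0`; by Bernoulli's inequality `c n * n ^ s` is then eventually
decreasing for some `s > 0`, whence `c → 0`. The Raabe sequence of `a + b` is the average of those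
of `a` and `b` with weights proportional to `a (n+1)` and `b (n+1)`, and the weight of `b` tends
to `0`.
-/

open Filter Topology

noncomputable def raabe (c : ℕ → ℝ) (n : ℕ) : ℝ := n * (c n / c (n + 1) - 1)

lemma tendsto_succ_div_of_tendsto_raabe {c : ℕ → ℝ} {r : ℝ}
    (h : Tendsto (raabe c) atTop (𝓝 r)) : Tendsto (fun n => c (n + 1) / c n) atTop (𝓝 1) := by
  have hsub : Tendsto (fun n => c n / c (n + 1) - 1) atTop (𝓝 0) := by
    have := (tendsto_inv_atTop_zero.comp tendsto_natCast_atTop_atTop).mul h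
    rw [zero_mul] at this
    refine this.congr' ?_
    filter_upwards [eventually_ne_atTop 0] with n hn
    simp [raabe, hn]
  simpa [inv_div] using (hsub.add_const 1).inv₀ (by norm_num)

lemma raabe_div {a b : ℕ → ℝ} (ha : ∀ n, a n ≠ 0) (hb : ∀ n, b n ≠ 0) (n : ℕ) :
    raabe (fun n => b n / a n) n = a (n + 1) / a n * (raabe b n - raabe a n) := by
  have := ha n; have := ha (n + 1); have := hb n; have := hb (n + 1)
  simp only [raabe]
  field_simp
  ring

lemma tendsto_raabe_div {a b : ℕ → ℝ} {p q : ℝ} (ha : ∀ n, a n ≠ 0) (hb : ∀ n, b n ≠ 0)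
    (hp : Tendsto (raabe a) atTop (𝓝 p)) (hq : Tendsto (raabe b) atTop (𝓝 q)) :
    Tendsto (raabe fun n => b n / a n) atTop (𝓝 (q - p)) := by
  have := (tendsto_succ_div_of_tendsto_raabe hp).mul (hq.sub hp)
  rw [one_mul] at this
  exact this.congr fun n => (raabe_div ha hb n).symm

lemma raabe_add {a b : ℕ → ℝ} {n : ℕ} (ha : a (n + 1) ≠ 0) (hb : b (n + 1) ≠ 0)
    (hab : a (n + 1) + b (n + 1) ≠ 0) :
    raabe (a + b) n = (1 - b (n + 1) / (a (n + 1) + b (n + 1))) * raabe a n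
      + b (n + 1) / (a (n + 1) + b (n + 1)) * raabe b n := by
  simp only [raabe, Pi.add_apply]
  field_simp
  ring

lemma add_one_rpow_le {x s : ℝ} (hx : 0 < x) (hs₀ : 0 ≤ s) (hs₁ : s ≤ 1) :
    (x + 1) ^ s ≤ x ^ s * (1 + s / x) := by
  have hbern : (1 + x⁻¹) ^ s ≤ 1 + s * x⁻¹ :=
    rpow_one_add_le_one_add_mul_self (by linarith [inv_pos.2 hx]) hs₀ hs₁
  calc (x + 1) ^ s = x ^ s * (1 + x⁻¹) ^ s := by
        rw [← Real.mul_rpow hx.le (by positivity), mul_add, mul_inv_cancel₀ hx.ne', mul_one]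
    _ ≤ x ^ s * (1 + s / x) := by
        rw [div_eq_mul_inv]
        exact mul_le_mul_of_nonneg_left hbern (by positivity)

lemma succ_mul_rpow_le_of_le_raabe {c : ℕ → ℝ} {n : ℕ} {s : ℝ} (hc : 0 < c (n + 1))
    (hn : 0 < n) (hs₀ : 0 ≤ s) (hs₁ : s ≤ 1) (h : s ≤ raabe c n) :
    c (n + 1) * ((n : ℝ) + 1) ^ s ≤ c n * (n : ℝ) ^ s := by
  have hn' : (0 : ℝ) < n := Nat.cast_pos.2 hn
  have hratio : c (n + 1) * (1 + s / n) ≤ c n := by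
    have : s / n ≤ c n / c (n + 1) - 1 := by
      rw [div_le_iff₀ hn', mul_comm]
      exact h
    rw [← le_div_iff₀' hc]
    linarith
  calc c (n + 1) * ((n : ℝ) + 1) ^ s ≤ c (n + 1) * ((n : ℝ) ^ s * (1 + s / n)) :=
        mul_le_mul_of_nonneg_left (add_one_rpow_le hn' hs₀ hs₁) hc.le
    _ = c (n + 1) * (1 + s / n) * (n : ℝ) ^ s := by ring
    _ ≤ c n * (n : ℝ) ^ s := mul_le_mul_of_nonneg_right hratio (by positivity)

lemma tendsto_zero_of_eventually_succ_mul_rpow_le {c : ℕ → ℝ} {s : ℝ} (hc : ∀ n, 0 ≤ c n)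
    (hs : 0 < s) (h : ∀ᶠ n in atTop, c (n + 1) * ((n : ℝ) + 1) ^ s ≤ c n * (n : ℝ) ^ s) :
    Tendsto c atTop (𝓝 0) := by
  obtain ⟨N, hN⟩ := eventually_atTop.1 (h.and (eventually_gt_atTop 0))
  have hbound : ∀ n ≥ N, c n * (n : ℝ) ^ s ≤ c N * (N : ℝ) ^ s := by
    refine Nat.le_induction le_rfl fun n hn ih => ?_
    exact_mod_cast (hN n hn).1.trans ih
  have hdecay : Tendsto (fun n : ℕ => c N * (N : ℝ) ^ s * (n : ℝ) ^ (-s)) atTop (𝓝 0) := by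
    simpa using ((tendsto_rpow_neg_atTop hs).comp tendsto_natCast_atTop_atTop).const_mul
      (c N * (N : ℝ) ^ s)
  refine squeeze_zero' (Eventually.of_forall hc) ?_ hdecay
  filter_upwards [eventually_ge_atTop N] with n hn
  have hn' : (0 : ℝ) < n := Nat.cast_pos.2 ((hN N le_rfl).2.trans_le hn)
  rw [Real.rpow_neg hn'.le, ← div_eq_mul_inv, le_div_iff₀ (by positivity)]
  exact hbound n hn

lemma tendsto_zero_of_tendsto_raabe {c : ℕ → ℝ} {r : ℝ} (hc : ∀ n, 0 < c n)
    (h : Tendsto (raabe c) atTop (𝓝 r)) (hr : 0 < r) : Tendsto c atTop (𝓝 0) := by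
  set s := min (r / 2) 1
  have hs₀ : 0 < s := lt_min (half_pos hr) one_pos
  have hs₁ : s ≤ 1 := min_le_right _ _
  have hsr : s < r := (min_le_left _ _).trans_lt (half_lt_self hr)
  refine tendsto_zero_of_eventually_succ_mul_rpow_le (fun n => (hc n).le) hs₀ ?_
  filter_upwards [h.eventually (eventually_ge_nhds hsr), eventually_gt_atTop 0] with n hsn hn
  exact succ_mul_rpow_le_of_le_raabe (hc _) hn hs₀.le hs₁ hsn

/-- If `(aₙ)` and `(bₙ)` are positive sequences with Raabe limits `p < q`, then
`(aₙ + bₙ)` has Raabe limit `p`. -/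
theorem raabe_value_add (a b : ℕ → ℝ) (ha : ∀ n, 0 < a n) (hb : ∀ n, 0 < b n)
    (p q : ℝ)
    (hp : Tendsto (fun n : ℕ => (n : ℝ) * (a n / a (n + 1) - 1)) atTop (nhds p))
    (hq : Tendsto (fun n : ℕ => (n : ℝ) * (b n / b (n + 1) - 1)) atTop (nhds q))
    (hpq : p < q) :
    Tendsto (fun n : ℕ => (n : ℝ) * ((a n + b n) / (a (n + 1) + b (n + 1)) - 1))
      atTop (nhds p) := by
  have hratio : Tendsto (fun n => b n / a n) atTop (𝓝 0) :=
    tendsto_zero_of_tendsto_raabe (fun n => div_pos (hb n) (ha n))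
      (tendsto_raabe_div (fun n => (ha n).ne') (fun n => (hb n).ne') hp hq) (sub_pos.2 hpq)
  have hweight : Tendsto (fun n => b (n + 1) / (a (n + 1) + b (n + 1))) atTop (𝓝 0) := by
    refine squeeze_zero (fun n => (div_pos (hb _) (add_pos (ha _) (hb _))).le) (fun n => ?_)
      (hratio.comp (tendsto_add_atTop_nat 1))
    exact div_le_div_of_nonneg_left (hb _).le (ha _) (le_add_of_nonneg_right (hb _).le)
  have hlim := ((tendsto_const_nhds (x := (1 : ℝ)).sub hweight).mul hp).add (hweight.mul hq)
  rw [sub_zero, one_mul, zero_mul, add_zero] at hlim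
  refine hlim.congr fun n => ?_
  exact (raabe_add (ha _).ne' (hb _).ne' (add_pos (ha _) (hb _)).ne').symm
end

section
/- If (a_n) and (b_n) are sequences of positive real numbers such that lim_{n→∞} n(a_n/a_{n+1} − 1) = p and lim_{n→∞} n(b_n/b_{n+1} − 1) = q with p < q, then the limit lim_{n→∞} n(|a_n − b_n|/|a_{n+1} − b_{n+1}| − 1) exists and equals p. -/
/-!
Write `rₙ = bₙ / aₙ`. Its Raabe limit is `q - p > 0`, so `nᵉ rₙ` is eventually decreasing for
small `e > 0` and hence `rₙ → 0`; in particular `|aₙ - bₙ| = aₙ (1 - rₙ)` eventually. The factor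
`1 - rₙ` changes the Raabe quantity of `aₙ` by `-(aₙ / aₙ₊₁) rₙ₊₁ ρₙ / (1 - rₙ₊₁)`, where `ρₙ → q - p`
is the Raabe quantity of `r`; this correction tends to `0`.
-/

open Filter Topology

noncomputable def raabeSeq (x : ℕ → ℝ) (n : ℕ) : ℝ := n * (x n / x (n + 1) - 1)

theorem tendsto_div_succ_of_tendsto_raabeSeq {x : ℕ → ℝ} {p : ℝ}
    (hx : Tendsto (raabeSeq x) atTop (𝓝 p)) :
    Tendsto (fun n => x n / x (n + 1)) atTop (𝓝 1) := by
  have h := (hx.mul tendsto_inv_atTop_nhds_zero_nat).add_const 1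
  rw [mul_zero, zero_add] at h
  refine h.congr' ?_
  filter_upwards [eventually_ne_atTop 0] with n hn
  have hn' : (n : ℝ) ≠ 0 := Nat.cast_ne_zero.mpr hn
  simp only [raabeSeq]
  field_simp
  ring

theorem raabeSeq_div {a b : ℕ → ℝ} {n : ℕ} (ha : a n ≠ 0) (ha' : a (n + 1) ≠ 0)
    (hb' : b (n + 1) ≠ 0) :
    raabeSeq (b / a) n = (raabeSeq b n - raabeSeq a n) / (a n / a (n + 1)) := by
  simp only [raabeSeq, Pi.div_apply]
  field_simp
  ring

theorem tendsto_raabeSeq_div {a b : ℕ → ℝ} {p q : ℝ} (ha : ∀ n, a n ≠ 0) (hb : ∀ n, b n ≠ 0)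
    (hp : Tendsto (raabeSeq a) atTop (𝓝 p)) (hq : Tendsto (raabeSeq b) atTop (𝓝 q)) :
    Tendsto (raabeSeq (b / a)) atTop (𝓝 (q - p)) := by
  have h := (hq.sub hp).div (tendsto_div_succ_of_tendsto_raabeSeq hp) one_ne_zero
  rw [div_one] at h
  exact h.congr fun n => (raabeSeq_div (ha n) (ha (n + 1)) (hb (n + 1))).symm

theorem rpow_mul_succ_le_of_le_raabeSeq {r : ℕ → ℝ} {e : ℝ} {n : ℕ} (hn : 0 < n)
    (hr : 0 < r (n + 1)) (he0 : 0 ≤ e) (he1 : e ≤ 1) (he : e ≤ raabeSeq r n) :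
    ((n + 1 : ℕ) : ℝ) ^ e * r (n + 1) ≤ (n : ℝ) ^ e * r n := by
  have hn' : (0 : ℝ) < n := Nat.cast_pos.mpr hn
  have hratio : (1 + 1 / (n : ℝ)) ^ e ≤ r n / r (n + 1) := calc
    (1 + 1 / (n : ℝ)) ^ e ≤ 1 + e * (1 / n) :=
      rpow_one_add_le_one_add_mul_self (by linarith [one_div_pos.mpr hn']) he0 he1
    _ ≤ r n / r (n + 1) := by
      rw [raabeSeq] at he
      rw [mul_one_div, ← le_sub_iff_add_le', div_le_iff₀ hn']
      linarith
  have hsucc : ((n + 1 : ℕ) : ℝ) ^ e = (n : ℝ) ^ e * (1 + 1 / (n : ℝ)) ^ e := by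
    rw [← Real.mul_rpow hn'.le (by positivity)]
    congr 1
    field_simp
    push_cast
    ring
  calc ((n + 1 : ℕ) : ℝ) ^ e * r (n + 1)
      = (n : ℝ) ^ e * ((1 + 1 / (n : ℝ)) ^ e * r (n + 1)) := by rw [hsucc, mul_assoc]
    _ ≤ (n : ℝ) ^ e * (r n / r (n + 1) * r (n + 1)) := by gcongr
    _ = (n : ℝ) ^ e * r n := by rw [div_mul_cancel₀ _ hr.ne']

theorem tendsto_zero_of_tendsto_raabeSeq_pos {r : ℕ → ℝ} {c : ℝ} (hr : ∀ n, 0 < r n)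
    (hc : 0 < c) (h : Tendsto (raabeSeq r) atTop (𝓝 c)) : Tendsto r atTop (𝓝 0) := by
  set e := min (c / 2) 1
  have he0 : 0 < e := lt_min (half_pos hc) one_pos
  have he1 : e ≤ 1 := min_le_right _ _
  have hec : e < c := (min_le_left _ _).trans_lt (half_lt_self hc)
  obtain ⟨N, hN⟩ := eventually_atTop.mp
    ((h.eventually (eventually_gt_nhds hec)).and (eventually_gt_atTop 0))
  set C := (N : ℝ) ^ e * r N
  have hbound : ∀ n ≥ N, (n : ℝ) ^ e * r n ≤ C := by
    intro n hn
    induction n, hn using Nat.le_induction with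
    | base => exact le_rfl
    | succ k hk ih =>
      exact (rpow_mul_succ_le_of_le_raabeSeq (hN k hk).2 (hr _) he0.le he1 (hN k hk).1.le).trans ih
  have hlim : Tendsto (fun n : ℕ => C * (n : ℝ) ^ (-e)) atTop (𝓝 0) := by
    simpa using ((tendsto_rpow_neg_atTop he0).comp tendsto_natCast_atTop_atTop).const_mul C
  refine squeeze_zero' (Eventually.of_forall fun n => (hr n).le) ?_ hlim
  filter_upwards [eventually_ge_atTop N, eventually_gt_atTop 0] with n hn hn0
  have hpow : (0 : ℝ) < (n : ℝ) ^ e := Real.rpow_pos_of_pos (Nat.cast_pos.mpr hn0) e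
  rw [Real.rpow_neg (Nat.cast_nonneg n), ← div_eq_mul_inv, le_div_iff₀ hpow, mul_comm]
  exact hbound n hn

theorem raabeSeq_mul_one_sub {a r : ℕ → ℝ} {n : ℕ} (ha' : a (n + 1) ≠ 0)
    (hr' : r (n + 1) ≠ 0) (hr1 : 1 - r (n + 1) ≠ 0) :
    raabeSeq (fun k => a k * (1 - r k)) n =
      raabeSeq a n - a n / a (n + 1) * r (n + 1) * raabeSeq r n / (1 - r (n + 1)) := by
  simp only [raabeSeq]
  field_simp
  ring

theorem tendsto_raabeSeq_mul_one_sub {a r : ℕ → ℝ} {p c : ℝ} (ha : ∀ n, a n ≠ 0)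
    (hr : ∀ n, r n ≠ 0) (hp : Tendsto (raabeSeq a) atTop (𝓝 p))
    (hr0 : Tendsto r atTop (𝓝 0)) (hc : Tendsto (raabeSeq r) atTop (𝓝 c)) :
    Tendsto (raabeSeq fun k => a k * (1 - r k)) atTop (𝓝 p) := by
  have hr0' : Tendsto (fun n => r (n + 1)) atTop (𝓝 0) := hr0.comp (tendsto_add_atTop_nat 1)
  have hden : Tendsto (fun n => 1 - r (n + 1)) atTop (𝓝 1) := by
    simpa using tendsto_const_nhds.sub hr0'
  have h := hp.sub ((((tendsto_div_succ_of_tendsto_raabeSeq hp).mul hr0').mul hc).div hden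
    one_ne_zero)
  rw [mul_zero, zero_mul, zero_div, sub_zero] at h
  refine h.congr' ?_
  filter_upwards [hden.eventually_ne one_ne_zero] with n hn
  exact (raabeSeq_mul_one_sub (ha (n + 1)) (hr (n + 1)) hn).symm

/-- If `(aₙ)` and `(bₙ)` are positive sequences with Raabe limits `p < q`, then
`n * (|aₙ - bₙ| / |a_{n+1} - b_{n+1}| - 1) → p`. -/
theorem raabe_value_sub (a b : ℕ → ℝ) (ha : ∀ n, 0 < a n) (hb : ∀ n, 0 < b n)
    (p q : ℝ)
    (hp : Tendsto (fun n : ℕ => (n : ℝ) * (a n / a (n + 1) - 1)) atTop (nhds p))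
    (hq : Tendsto (fun n : ℕ => (n : ℝ) * (b n / b (n + 1) - 1)) atTop (nhds q))
    (hpq : p < q) :
    Tendsto (fun n : ℕ => (n : ℝ) * (|a n - b n| / |a (n + 1) - b (n + 1)| - 1))
      atTop (nhds p) := by
  have hr_pos : ∀ n, 0 < (b / a) n := fun n => div_pos (hb n) (ha n)
  have hr := tendsto_raabeSeq_div (fun n => (ha n).ne') (fun n => (hb n).ne') hp hq
  have hr0 := tendsto_zero_of_tendsto_raabeSeq_pos hr_pos (sub_pos.mpr hpq) hr
  have hsub : (fun k => a k * (1 - (b / a) k)) = fun k => a k - b k := by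
    funext k
    rw [Pi.div_apply, mul_one_sub, mul_div_cancel₀ _ (ha k).ne']
  have h := tendsto_raabeSeq_mul_one_sub (fun n => (ha n).ne') (fun n => (hr_pos n).ne') hp hr0 hr
  rw [hsub] at h
  have hlt : ∀ᶠ n in atTop, b n < a n := by
    filter_upwards [hr0.eventually (eventually_lt_nhds one_pos)] with n hn
    exact (div_lt_one (ha n)).mp hn
  refine h.congr' ?_
  filter_upwards [hlt, (tendsto_add_atTop_nat 1).eventually hlt] with n h0 h1
  rw [raabeSeq, abs_of_pos (sub_pos.mpr h0), abs_of_pos (sub_pos.mpr h1)]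
end
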